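/- Let A be a unital C*-algebra with unitary group U(A), s a fixed nonzero complex number with |s| < 1, r > 2 a real number, and θ ≥ 0. Suppose f : A³ → A satisfies f(x, 0, a) = f(0, z, a) = f(x, z, 0) = 0 for all x, z, a ∈ A and, for all λ, μ, η ∈ T¹ and all x, y, z, w, a, b ∈ A, ‖2f(λ(x+y)/2, μ(z−w), η(a+b)) + 2f(λ(x−y)/2, μ(z+w), η(a−b)) − λμη(2f(x,z,a) − 2f(x,w,b) + 2f(y,z,b) − 2f(y,w,a))‖ ≤ ‖s · D₁f(x, y, z, w, a, b)‖ + θ(‖x‖^r + ‖y‖^r)(‖z‖^r + ‖w‖^r)(‖a‖^r + ‖b‖^r). Then there exists a unique ℂ-trilinear mapping D : A³ → A such that ‖f(x, z, a) − D(x, z, a)‖ ≤ (2^r θ/(2(2^r − 2))) ‖x‖^r ‖z‖^r ‖a‖^r for all x, z, a ∈ A. If, in addition, f satisfies ‖f(x_{σ(1)}, x_{σ(2)}, x_{σ(3)}) − f(x₁, x₂, x₃)‖ ≤ θ ‖x₁‖^r ‖x₂‖^r ‖x₃‖^r for all x₁, x₂, x₃ ∈ A and every permutation (σ(1), σ(2),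 σ(3)) of (1,2,3), and ‖f(uy, z, a) − f(u, z, a)y − u f(y, z, a)‖ ≤ θ(1 + ‖y‖^r)‖z‖^r ‖a‖^r for all u ∈ U(A) and all y, z, a ∈ A, then D is a permuting triderivation. -/

import Mathlib

/-!
`D(x, z, a) = lim 2ⁿ f(2⁻ⁿ x, z, a)` (Hyers' direct method in the first variable). Putting
`y = w = b = 0` in the hypothesis bounds `‖2 f(λx/2, μz, ηa) - λμη f(x, z, a)‖` by
`θ/2 ‖x‖ʳ‖z‖ʳ‖a‖ʳ`, so consecutive terms of the sequence differ by a multiple of `(2^(1-r))ⁿ`;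
summing the geometric series gives the limit and the constant `2ʳθ / (2(2ʳ - 2))`. In the limit
the `θ`-terms of the hypothesis disappear and `‖s‖ < 1` forces `D₁ D = 0`, which makes `D`
tri-additive; together with `D(λx, μz, ηa) = λμη D(x, z, a)` for unit `λ, μ, η` this gives
ℂ-trilinearity, because every complex number of modulus at most `2` is a sum of two of modulus `1`.

Everything else rests on one observation: a map that is ℂ-homogeneous in one variable and
`O(‖·‖ʳ)` in it with `r > 1` vanishes. It applies to the difference of two approximating
trilinear maps (uniqueness), to `D(uy, z, a) - D(u, z, a) y - u D(y, z, a)` as a function of `z`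
for unitary `u`, and to `D(z, x, a) - D(x, z, a)` and `D(x, a, z) - D(x, z, a)`. The unitaries
span a unital C⋆-algebra, so the Leibniz rule extends from them to all of `A`, and the two
transpositions generate all permutations of three variables.
-/

/-- A mapping `f : X³ → Y` is *tri-additive* if it is additive in each variable. -/
def TriAdditive {X Y : Type*} [AddCommGroup X] [AddCommGroup Y]
    (f : X → X → X → Y) : Prop :=
  (∀ x x' z a : X, f (x + x') z a = f x z a + f x' z a) ∧
  (∀ x z z' a : X, f x (z + z') a = f x z a + f x z' a) ∧
  (∀ x z a a' : X, f x z (a + a') = f x z a + f x z a')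

/-- A mapping `f : X³ → Y` is *ℂ-trilinear* if it is ℂ-linear in each variable. -/
def CTrilinear {X Y : Type*} [AddCommGroup X] [Module ℂ X] [AddCommGroup Y] [Module ℂ Y]
    (f : X → X → X → Y) : Prop :=
  TriAdditive f ∧
  (∀ (c : ℂ) (x z a : X), f (c • x) z a = c • f x z a) ∧
  (∀ (c : ℂ) (x z a : X), f x (c • z) a = c • f x z a) ∧
  (∀ (c : ℂ) (x z a : X), f x z (c • a) = c • f x z a)

/-- `D₁f(x, y, z, w, a, b)`. -/
def D₁ {X Y : Type*} [AddCommGroup X] [Module ℂ X] [AddCommGroup Y] [Module ℂ Y]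
    (f : X → X → X → Y) (x y z w a b : X) : Y :=
  f (x + y) (z - w) (a + b) + f (x - y) (z + w) (a - b)
    - (2 : ℂ) • f x z a + (2 : ℂ) • f x w b - (2 : ℂ) • f y z b + (2 : ℂ) • f y w a

/-- `D₂f(x, y, z, w, a, b)`. -/
noncomputable def D₂ {X Y : Type*} [AddCommGroup X] [Module ℂ X] [AddCommGroup Y] [Module ℂ Y]
    (f : X → X → X → Y) (x y z w a b : X) : Y :=
  (2 : ℂ) • f ((2 : ℂ)⁻¹ • (x + y)) (z - w) (a + b)
    + (2 : ℂ) • f ((2 : ℂ)⁻¹ • (x - y)) (z + w) (a - b)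
    - (2 : ℂ) • f x z a + (2 : ℂ) • f x w b - (2 : ℂ) • f y z b + (2 : ℂ) • f y w a


/-- A ℂ-trilinear `D : A³ → A` is a *permuting triderivation* if it is a derivation in the
first variable and is invariant under every permutation of its three variables. -/
def PermutingTriderivation {A : Type*} [Ring A] [Module ℂ A]
    (D : A → A → A → A) : Prop :=
  CTrilinear D ∧
  (∀ x y z w : A, D (x * y) z w = D x z w * y + x * D y z w) ∧
  (∀ (σ : Equiv.Perm (Fin 3)) (x : Fin 3 → A),
    D (x (σ 0)) (x (σ 1)) (x (σ 2)) = D (x 0) (x 1) (x 2))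

open Filter Topology

lemma exists_norm_eq_one_add_eq {d : ℂ} (hd : ‖d‖ ≤ 2) :
    ∃ μ₁ μ₂ : ℂ, ‖μ₁‖ = 1 ∧ ‖μ₂‖ = 1 ∧ μ₁ + μ₂ = d := by
  set c : ℝ := ‖d‖ / 2 with hc_def
  have hc : c ^ 2 ≤ 1 := by
    have : c ≤ 1 := by linarith
    nlinarith [norm_nonneg d]
  have hunit : ∀ t : ℝ, t ^ 2 = 1 - c ^ 2 →
      ‖Complex.exp (d.arg * Complex.I) * (c + t * Complex.I)‖ = 1 := by
    intro t ht
    rw [norm_mul, Complex.norm_exp_ofReal_mul_I, one_mul, Complex.norm_def,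
      Complex.normSq_add_mul_I, ht]
    simp
  refine ⟨_, _, hunit √(1 - c ^ 2) (Real.sq_sqrt (by linarith)),
    hunit (-√(1 - c ^ 2)) (by rw [neg_sq, Real.sq_sqrt (by linarith)]), ?_⟩
  calc _ = (‖d‖ : ℂ) * Complex.exp (d.arg * Complex.I) := by push_cast [hc_def]; ring
    _ = d := Complex.norm_mul_exp_arg_mul_I d

section Algebraic

variable {X Y : Type*} [AddCommGroup X] [Module ℂ X] [AddCommGroup Y] [Module ℂ Y]

lemma map_smul_of_map_add_of_unit_smul {g : X → Y} (hadd : ∀ u v, g (u + v) = g u + g v)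
    (hunit : ∀ c : ℂ, ‖c‖ = 1 → ∀ v, g (c • v) = c • g v) (c : ℂ) (v : X) :
    g (c • v) = c • g v := by
  obtain ⟨n, hn⟩ := exists_nat_ge ‖c‖
  have hn₀ : ((n + 1 : ℕ) : ℂ) ≠ 0 := Nat.cast_ne_zero.2 n.succ_ne_zero
  obtain ⟨μ₁, μ₂, h₁, h₂, hμ⟩ := exists_norm_eq_one_add_eq (d := c / (n + 1 : ℕ)) (by
    rw [norm_div, Complex.norm_natCast, div_le_iff₀ (by positivity)]
    push_cast
    linarith)
  have hc : c = (n + 1 : ℕ) * (μ₁ + μ₂) := by rw [hμ]; field_simp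
  let G : X →+ Y := AddMonoidHom.mk' g hadd
  calc g (c • v) = G ((n + 1) • (μ₁ • v + μ₂ • v)) := by
        rw [hc, mul_smul, add_smul, Nat.cast_smul_eq_nsmul]; rfl
    _ = (n + 1) • (μ₁ • g v + μ₂ • g v) := by
        rw [map_nsmul, map_add]
        simp only [G, AddMonoidHom.mk'_apply, hunit _ h₁, hunit _ h₂]
    _ = c • g v := by rw [hc, mul_smul, add_smul μ₁, Nat.cast_smul_eq_nsmul]

lemma map_add_of_map_add_add_map_sub {g : X → Y} (h₀ : g 0 = 0)
    (h : ∀ u v, g (u + v) + g (u - v) = (2 : ℂ) • g u) (u v : X) : g (u + v) = g u + g v := by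
  have hdouble : g (u + v) = (2 : ℂ) • g ((2 : ℂ)⁻¹ • (u + v)) := by
    simpa [h₀, ← two_smul ℂ] using h ((2 : ℂ)⁻¹ • (u + v)) ((2 : ℂ)⁻¹ • (u + v))
  have hmid := h ((2 : ℂ)⁻¹ • (u + v)) ((2 : ℂ)⁻¹ • (u - v))
  rw [show (2 : ℂ)⁻¹ • (u + v) + (2 : ℂ)⁻¹ • (u - v) = u by module,
    show (2 : ℂ)⁻¹ • (u + v) - (2 : ℂ)⁻¹ • (u - v) = v by module] at hmid
  rw [hdouble, hmid]

lemma triAdditive_of_D₁_eq_zero {D : X → X → X → Y} (hzero₁ : ∀ z a, D 0 z a = 0)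
    (hzero₂ : ∀ x a, D x 0 a = 0) (hzero₃ : ∀ x z, D x z 0 = 0)
    (hD : ∀ x y z w a b, D₁ D x y z w a b = 0) : TriAdditive D := by
  have add₁ : ∀ x x' z a, D (x + x') z a = D x z a + D x' z a := fun x x' z a =>
    map_add_of_map_add_add_map_sub (g := (D · z a)) (hzero₁ z a) (fun u v => by
      simpa [D₁, hzero₂, hzero₃, sub_eq_zero] using hD u v z 0 a 0) x x'
  have add₃ : ∀ x z a a', D x z (a + a') = D x z a + D x z a' := fun x z =>
    map_add_of_map_add_add_map_sub (g := D x z) (hzero₃ x z) (fun u v => by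
      simpa [D₁, hzero₁, hzero₂, sub_eq_zero] using hD x 0 z 0 u v)
  have sub₂ : ∀ x z w a, D x (z - w) a = D x z a - D x w a := fun x z w a => by
    have h := hD x 0 z w a a
    simp only [D₁, add_zero, sub_zero, sub_self, hzero₁, hzero₃, add₃] at h
    refine smul_right_injective Y (two_ne_zero (α := ℂ)) ?_
    simp only [smul_sub, two_smul]
    linear_combination (norm := module) h
  exact ⟨add₁,
    fun x z w a => (AddMonoidHom.ofMapSub (D x · a) fun z w => sub₂ x z w a).map_add z w, add₃⟩

lemma cTrilinear_of_D₁_eq_zero {D : X → X → X → Y} (hD : ∀ x y z w a b, D₁ D x y z w a b = 0)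
    (hunit : ∀ l m e : ℂ, ‖l‖ = 1 → ‖m‖ = 1 → ‖e‖ = 1 → ∀ x z a,
      D (l • x) (m • z) (e • a) = (l * m * e) • D x z a) :
    CTrilinear D := by
  have h₁ : ∀ c : ℂ, ‖c‖ = 1 → ∀ x z a, D (c • x) z a = c • D x z a := fun c hc x z a => by
    simpa using hunit c 1 1 hc norm_one norm_one x z a
  have h₂ : ∀ c : ℂ, ‖c‖ = 1 → ∀ x z a, D x (c • z) a = c • D x z a := fun c hc x z a => by
    simpa using hunit 1 c 1 norm_one hc norm_one x z a
  have h₃ : ∀ c : ℂ, ‖c‖ = 1 → ∀ x z a, D x z (c • a) = c • D x z a := fun c hc x z a => by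
    simpa using hunit 1 1 c norm_one norm_one hc x z a
  have hneg : ∀ v : Y, (-1 : ℂ) • v = v → v = 0 := fun v hv =>
    (smul_eq_zero.1 (show (2 : ℂ) • v = 0 by linear_combination (norm := module) -hv)).resolve_left
      two_ne_zero
  obtain ⟨add₁, add₂, add₃⟩ := triAdditive_of_D₁_eq_zero
    (fun z a => hneg _ (by simpa using (h₁ (-1) (by simp) 0 z a).symm))
    (fun x a => hneg _ (by simpa using (h₂ (-1) (by simp) x 0 a).symm))
    (fun x z => hneg _ (by simpa using (h₃ (-1) (by simp) x z 0).symm)) hD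
  exact ⟨⟨add₁, add₂, add₃⟩,
    fun c x z a =>
      map_smul_of_map_add_of_unit_smul (g := (D · z a)) (add₁ · · z a) (h₁ · · · z a) c x,
    fun c x z a =>
      map_smul_of_map_add_of_unit_smul (g := (D x · a)) (add₂ x · · a) (h₂ · · x · a) c z,
    fun c x z a => map_smul_of_map_add_of_unit_smul (g := D x z) (add₃ x z) (h₃ · · x z) c a⟩

end Algebraic

section Dyadic

variable {X Y : Type*} [NormedAddCommGroup X] [NormedSpace ℂ X] [NormedAddCommGroup Y]
  [NormedSpace ℂ Y]

lemma two_div_two_rpow_lt_one {r : ℝ} (hr : 1 < r) : 2 / (2 : ℝ) ^ r < 1 := by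
  rw [div_lt_one (by positivity)]
  simpa using Real.rpow_lt_rpow_of_exponent_lt one_lt_two hr

lemma tendsto_mul_two_div_two_rpow_pow {r : ℝ} (hr : 1 < r) (C : ℝ) :
    Tendsto (fun n : ℕ => C * (2 / (2 : ℝ) ^ r) ^ n) atTop (𝓝 0) := by
  simpa using (tendsto_pow_atTop_nhds_zero_of_lt_one (by positivity)
    (two_div_two_rpow_lt_one hr)).const_mul C

lemma two_pow_mul_norm_inv_two_pow_smul_rpow (r : ℝ) (n : ℕ) (x : X) :
    (2 : ℝ) ^ n * ‖((2 : ℂ) ^ n)⁻¹ • x‖ ^ r = ‖x‖ ^ r * (2 / (2 : ℝ) ^ r) ^ n := by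
  rw [norm_smul, norm_inv, norm_pow, Complex.norm_ofNat, inv_mul_eq_div,
    Real.div_rpow (norm_nonneg x) (by positivity), ← Real.rpow_pow_comm (by norm_num), div_pow]
  field_simp

lemma norm_two_pow_smul_le {r C : ℝ} {n : ℕ} {x : X} {w : Y}
    (h : ‖w‖ ≤ C * ‖((2 : ℂ) ^ n)⁻¹ • x‖ ^ r) :
    ‖(2 : ℂ) ^ n • w‖ ≤ C * ‖x‖ ^ r * (2 / (2 : ℝ) ^ r) ^ n := by
  rw [norm_smul, norm_pow, Complex.norm_ofNat]
  calc (2 : ℝ) ^ n * ‖w‖ ≤ 2 ^ n * (C * ‖((2 : ℂ) ^ n)⁻¹ • x‖ ^ r) := by gcongr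
    _ = C * ‖x‖ ^ r * (2 / (2 : ℝ) ^ r) ^ n := by
      linear_combination C * two_pow_mul_norm_inv_two_pow_smul_rpow r n x

lemma eq_zero_of_map_smul_of_norm_le {Φ : X → Y} {r C : ℝ} (hr : 1 < r)
    (hΦ : ∀ (c : ℂ) (v : X), Φ (c • v) = c • Φ v) (hb : ∀ v, ‖Φ v‖ ≤ C * ‖v‖ ^ r) (v : X) :
    Φ v = 0 := by
  refine norm_le_zero_iff.1
    (ge_of_tendsto' (tendsto_mul_two_div_two_rpow_pow hr (C * ‖v‖ ^ r)) fun n => ?_)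
  have hv : Φ v = (2 : ℂ) ^ n • Φ (((2 : ℂ) ^ n)⁻¹ • v) := by
    rw [hΦ, smul_inv_smul₀ (pow_ne_zero n two_ne_zero)]
  exact hv ▸ norm_two_pow_smul_le (hb _)

noncomputable def dyadicRescale (F : X → Y) (n : ℕ) (x : X) : Y :=
  (2 : ℂ) ^ n • F (((2 : ℂ) ^ n)⁻¹ • x)

noncomputable def dyadicLimit (F : X → Y) (x : X) : Y :=
  limUnder atTop fun n => dyadicRescale F n x

lemma inv_two_pow_succ_smul (n : ℕ) (v : X) :
    ((2 : ℂ) ^ (n + 1))⁻¹ • v = (2 : ℂ)⁻¹ • ((2 : ℂ) ^ n)⁻¹ • v := by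
  rw [smul_smul, ← mul_inv, ← pow_succ']

lemma dist_dyadicRescale_succ_le {F : X → Y} {r M : ℝ}
    (hF : ∀ x, ‖(2 : ℂ) • F ((2 : ℂ)⁻¹ • x) - F x‖ ≤ M * ‖x‖ ^ r) (x : X) (n : ℕ) :
    dist (dyadicRescale F n x) (dyadicRescale F (n + 1) x) ≤
      M * ‖x‖ ^ r * (2 / (2 : ℝ) ^ r) ^ n := by
  have hstep : dyadicRescale F (n + 1) x - dyadicRescale F n x = (2 : ℂ) ^ n •
      ((2 : ℂ) • F ((2 : ℂ)⁻¹ • ((2 : ℂ) ^ n)⁻¹ • x) - F (((2 : ℂ) ^ n)⁻¹ • x)) := by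
    rw [dyadicRescale, dyadicRescale, inv_two_pow_succ_smul, pow_succ, mul_smul, smul_sub]
  rw [dist_comm, dist_eq_norm, hstep]
  exact norm_two_pow_smul_le (hF _)

variable [CompleteSpace Y]

lemma tendsto_dyadicLimit {F : X → Y} {r M : ℝ} (hr : 1 < r)
    (hF : ∀ x, ‖(2 : ℂ) • F ((2 : ℂ)⁻¹ • x) - F x‖ ≤ M * ‖x‖ ^ r) (x : X) :
    Tendsto (dyadicRescale F · x) atTop (𝓝 (dyadicLimit F x)) :=
  (cauchySeq_of_le_geometric _ _ (two_div_two_rpow_lt_one hr)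
    (dist_dyadicRescale_succ_le hF x)).tendsto_limUnder

lemma norm_sub_dyadicLimit_le {F : X → Y} {r M : ℝ} (hr : 1 < r)
    (hF : ∀ x, ‖(2 : ℂ) • F ((2 : ℂ)⁻¹ • x) - F x‖ ≤ M * ‖x‖ ^ r) (x : X) :
    ‖F x - dyadicLimit F x‖ ≤ 2 ^ r * M / (2 ^ r - 2) * ‖x‖ ^ r := by
  have h := dist_le_of_le_geometric_of_tendsto₀ _ _ (two_div_two_rpow_lt_one hr)
    (dist_dyadicRescale_succ_le hF x) (tendsto_dyadicLimit hr hF x)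
  have h2r : (2 : ℝ) < 2 ^ r := by simpa using Real.rpow_lt_rpow_of_exponent_lt one_lt_two hr
  rw [dyadicRescale, pow_zero, inv_one, one_smul, one_smul, dist_eq_norm] at h
  refine h.trans_eq ?_
  field_simp

end Dyadic

section TrilinearLimit

variable {X Y : Type*} [NormedAddCommGroup X] [NormedSpace ℂ X] [NormedAddCommGroup Y]
  [NormedSpace ℂ Y] {f : X → X → X → Y} {r M : ℝ}

noncomputable def dyadicLimit₁ (f : X → X → X → Y) (x z a : X) : Y :=
  dyadicLimit (f · z a) x

def HalvingEstimate (f : X → X → X → Y) (r M : ℝ) : Prop :=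
  ∀ l m e : ℂ, ‖l‖ = 1 → ‖m‖ = 1 → ‖e‖ = 1 → ∀ x z a,
    ‖(2 : ℂ) • f ((2 : ℂ)⁻¹ • l • x) (m • z) (e • a) - (l * m * e) • f x z a‖ ≤
      M * (‖x‖ ^ r * ‖z‖ ^ r * ‖a‖ ^ r)

lemma tendsto_D₁_of_tendsto {G G' : ℕ → X → X → X → Y} {D : X → X → X → Y}
    (hG : ∀ x z a, Tendsto (G · x z a) atTop (𝓝 (D x z a)))
    (hG' : ∀ x z a, Tendsto (G' · x z a) atTop (𝓝 (D x z a))) (x y z w a b : X) :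
    Tendsto (fun n => G' n (x + y) (z - w) (a + b) + G' n (x - y) (z + w) (a - b)
      - (2 : ℂ) • G n x z a + (2 : ℂ) • G n x w b - (2 : ℂ) • G n y z b + (2 : ℂ) • G n y w a)
      atTop (𝓝 (D₁ D x y z w a b)) :=
  (((((hG' _ _ _).add (hG' _ _ _)).sub ((hG _ _ _).const_smul _)).add
    ((hG _ _ _).const_smul _)).sub ((hG _ _ _).const_smul _)).add ((hG _ _ _).const_smul _)

lemma two_pow_smul_D₁ (f : X → X → X → Y) (n : ℕ) (x y z w a b : X) :
    (2 : ℂ) ^ n • D₁ f (((2 : ℂ) ^ n)⁻¹ • x) (((2 : ℂ) ^ n)⁻¹ • y) z w a b =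
      D₁ (fun x z a => dyadicRescale (f · z a) n x) x y z w a b := by
  simp only [D₁, dyadicRescale, smul_add, smul_sub, smul_comm ((2 : ℂ) ^ n) (2 : ℂ)]

lemma two_pow_smul_D₂ (f : X → X → X → Y) (n : ℕ) (x y z w a b : X) :
    (2 : ℂ) ^ n • D₂ f (((2 : ℂ) ^ n)⁻¹ • x) (((2 : ℂ) ^ n)⁻¹ • y) z w a b =
      dyadicRescale (f · (z - w) (a + b)) (n + 1) (x + y)
        + dyadicRescale (f · (z + w) (a - b)) (n + 1) (x - y)
        - (2 : ℂ) • dyadicRescale (f · z a) n x + (2 : ℂ) • dyadicRescale (f · w b) n x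
        - (2 : ℂ) • dyadicRescale (f · z b) n y + (2 : ℂ) • dyadicRescale (f · w a) n y := by
  simp only [dyadicRescale, inv_two_pow_succ_smul]
  simp only [D₂, smul_add, smul_sub, pow_succ, mul_smul, smul_comm ((2 : ℂ) ^ n) (2 : ℂ)]

lemma HalvingEstimate.norm_two_smul_sub_le (hf : HalvingEstimate f r M) (z a x : X) :
    ‖(2 : ℂ) • f ((2 : ℂ)⁻¹ • x) z a - f x z a‖ ≤ M * (‖z‖ ^ r * ‖a‖ ^ r) * ‖x‖ ^ r := by
  have h := hf 1 1 1 norm_one norm_one norm_one x z a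
  simp only [one_smul, mul_one] at h
  exact h.trans_eq (by ring)

lemma norm_two_pow_smul_D₂_le {c θ : ℝ}
    (hD₂ : ∀ x y z w a b, ‖D₂ f x y z w a b‖ ≤ c * ‖D₁ f x y z w a b‖ +
      θ * (‖x‖ ^ r + ‖y‖ ^ r) * (‖z‖ ^ r + ‖w‖ ^ r) * (‖a‖ ^ r + ‖b‖ ^ r))
    (n : ℕ) (x y z w a b : X) :
    ‖(2 : ℂ) ^ n • D₂ f (((2 : ℂ) ^ n)⁻¹ • x) (((2 : ℂ) ^ n)⁻¹ • y) z w a b‖ ≤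
      c * ‖(2 : ℂ) ^ n • D₁ f (((2 : ℂ) ^ n)⁻¹ • x) (((2 : ℂ) ^ n)⁻¹ • y) z w a b‖ +
        θ * (‖x‖ ^ r + ‖y‖ ^ r) * (‖z‖ ^ r + ‖w‖ ^ r) * (‖a‖ ^ r + ‖b‖ ^ r) *
          (2 / (2 : ℝ) ^ r) ^ n := by
  rw [norm_smul, norm_smul, norm_pow, Complex.norm_ofNat]
  calc (2 : ℝ) ^ n * ‖D₂ f (((2 : ℂ) ^ n)⁻¹ • x) (((2 : ℂ) ^ n)⁻¹ • y) z w a b‖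
      ≤ 2 ^ n * (c * ‖D₁ f (((2 : ℂ) ^ n)⁻¹ • x) (((2 : ℂ) ^ n)⁻¹ • y) z w a b‖ + θ *
        (‖((2 : ℂ) ^ n)⁻¹ • x‖ ^ r + ‖((2 : ℂ) ^ n)⁻¹ • y‖ ^ r) * (‖z‖ ^ r + ‖w‖ ^ r) *
          (‖a‖ ^ r + ‖b‖ ^ r)) := by gcongr; exact hD₂ _ _ z w a b
    _ = _ := by
      linear_combination θ * (‖z‖ ^ r + ‖w‖ ^ r) * (‖a‖ ^ r + ‖b‖ ^ r) *
        (two_pow_mul_norm_inv_two_pow_smul_rpow r n x +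
          two_pow_mul_norm_inv_two_pow_smul_rpow r n y)

variable [CompleteSpace Y]

lemma HalvingEstimate.tendsto_dyadicLimit₁ (hr : 1 < r) (hf : HalvingEstimate f r M) (x z a : X) :
    Tendsto (dyadicRescale (f · z a) · x) atTop (𝓝 (dyadicLimit₁ f x z a)) :=
  tendsto_dyadicLimit hr (hf.norm_two_smul_sub_le z a) x

lemma HalvingEstimate.norm_sub_dyadicLimit₁_le (hr : 1 < r) (hf : HalvingEstimate f r M)
    (x z a : X) :
    ‖f x z a - dyadicLimit₁ f x z a‖ ≤
      2 ^ r * M / (2 ^ r - 2) * (‖x‖ ^ r * ‖z‖ ^ r * ‖a‖ ^ r) :=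
  (norm_sub_dyadicLimit_le (F := (f · z a)) hr (hf.norm_two_smul_sub_le z a) x).trans_eq
    (by ring)

lemma HalvingEstimate.dyadicLimit₁_unit_smul (hr : 1 < r) (hf : HalvingEstimate f r M)
    {l m e : ℂ} (hl : ‖l‖ = 1) (hm : ‖m‖ = 1) (he : ‖e‖ = 1) (x z a : X) :
    dyadicLimit₁ f (l • x) (m • z) (e • a) = (l * m * e) • dyadicLimit₁ f x z a := by
  have hlim := ((hf.tendsto_dyadicLimit₁ hr (l • x) (m • z) (e • a)).comp
    (tendsto_add_atTop_nat 1)).sub ((hf.tendsto_dyadicLimit₁ hr x z a).const_smul (l * m * e))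
  refine sub_eq_zero.1 (tendsto_nhds_unique hlim (squeeze_zero_norm (fun n => ?_)
    (tendsto_mul_two_div_two_rpow_pow hr (M * (‖z‖ ^ r * ‖a‖ ^ r) * ‖x‖ ^ r))))
  have hstep : dyadicRescale (f · (m • z) (e • a)) (n + 1) (l • x)
        - (l * m * e) • dyadicRescale (f · z a) n x = (2 : ℂ) ^ n •
      ((2 : ℂ) • f ((2 : ℂ)⁻¹ • l • ((2 : ℂ) ^ n)⁻¹ • x) (m • z) (e • a)
        - (l * m * e) • f (((2 : ℂ) ^ n)⁻¹ • x) z a) := by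
    rw [dyadicRescale, dyadicRescale, inv_two_pow_succ_smul, smul_comm _ l, pow_succ, mul_smul,
      smul_sub, smul_comm ((2 : ℂ) ^ n) (l * m * e)]
  simp only [Function.comp_apply, hstep]
  exact norm_two_pow_smul_le ((hf l m e hl hm he _ z a).trans_eq (by ring))

lemma HalvingEstimate.D₁_dyadicLimit₁_eq_zero (hr : 1 < r) (hf : HalvingEstimate f r M)
    {c θ : ℝ} (hc : c < 1) (hD₂ : ∀ x y z w a b, ‖D₂ f x y z w a b‖ ≤ c * ‖D₁ f x y z w a b‖ +
      θ * (‖x‖ ^ r + ‖y‖ ^ r) * (‖z‖ ^ r + ‖w‖ ^ r) * (‖a‖ ^ r + ‖b‖ ^ r)) (x y z w a b : X) :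
    D₁ (dyadicLimit₁ f) x y z w a b = 0 := by
  have hG := hf.tendsto_dyadicLimit₁ hr
  have hS : Tendsto (fun n : ℕ =>
      (2 : ℂ) ^ n • D₂ f (((2 : ℂ) ^ n)⁻¹ • x) (((2 : ℂ) ^ n)⁻¹ • y) z w a b) atTop
      (𝓝 (D₁ (dyadicLimit₁ f) x y z w a b)) := by
    simpa only [two_pow_smul_D₂] using tendsto_D₁_of_tendsto
      (G' := fun n x z a => dyadicRescale (f · z a) (n + 1) x) hG
      (fun x z a => (hG x z a).comp (tendsto_add_atTop_nat 1)) x y z w a b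
  have hM : Tendsto (fun n : ℕ =>
      (2 : ℂ) ^ n • D₁ f (((2 : ℂ) ^ n)⁻¹ • x) (((2 : ℂ) ^ n)⁻¹ • y) z w a b) atTop
      (𝓝 (D₁ (dyadicLimit₁ f) x y z w a b)) := by
    simp only [two_pow_smul_D₁]
    exact tendsto_D₁_of_tendsto hG hG x y z w a b
  have hR := (hM.norm.const_mul c).add (tendsto_mul_two_div_two_rpow_pow hr
    (θ * (‖x‖ ^ r + ‖y‖ ^ r) * (‖z‖ ^ r + ‖w‖ ^ r) * (‖a‖ ^ r + ‖b‖ ^ r)))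
  rw [add_zero] at hR
  have hle := le_of_tendsto_of_tendsto' hS.norm hR (norm_two_pow_smul_D₂_le hD₂ · x y z w a b)
  exact norm_le_zero_iff.1 (by nlinarith [norm_nonneg (D₁ (dyadicLimit₁ f) x y z w a b)])

end TrilinearLimit

section Approximation

variable {X Y : Type*} [NormedAddCommGroup X] [NormedSpace ℂ X] [NormedAddCommGroup Y]
  [NormedSpace ℂ Y] {r : ℝ}

lemma CTrilinear.comp_swap₁₂ {D : X → X → X → Y} (hD : CTrilinear D) :
    CTrilinear fun x z a => D z x a :=
  ⟨⟨fun x x' z a => hD.1.2.1 z x x' a, fun x z z' a => hD.1.1 z z' x a,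
    fun x z a a' => hD.1.2.2 z x a a'⟩,
    fun c x z a => hD.2.2.1 c z x a, fun c x z a => hD.2.1 c z x a,
    fun c x z a => hD.2.2.2 c z x a⟩

lemma CTrilinear.comp_swap₂₃ {D : X → X → X → Y} (hD : CTrilinear D) :
    CTrilinear fun x z a => D x a z :=
  ⟨⟨fun x x' z a => hD.1.1 x x' a z, fun x z z' a => hD.1.2.2 x a z z',
    fun x z a a' => hD.1.2.1 x a a' z⟩,
    fun c x z a => hD.2.1 c x a z, fun c x z a => hD.2.2.2 c x a z,
    fun c x z a => hD.2.2.1 c x a z⟩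

lemma CTrilinear.eq_of_approx {f g D E : X → X → X → Y} {K K' θ : ℝ} (hr : 1 < r)
    (hD : CTrilinear D) (hE : CTrilinear E)
    (hfD : ∀ x z a, ‖f x z a - D x z a‖ ≤ K * (‖x‖ ^ r * ‖z‖ ^ r * ‖a‖ ^ r))
    (hgE : ∀ x z a, ‖g x z a - E x z a‖ ≤ K' * (‖x‖ ^ r * ‖z‖ ^ r * ‖a‖ ^ r))
    (hfg : ∀ x z a, ‖f x z a - g x z a‖ ≤ θ * (‖x‖ ^ r * ‖z‖ ^ r * ‖a‖ ^ r)) : D = E := by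
  funext x z a
  refine sub_eq_zero.1 (eq_zero_of_map_smul_of_norm_le (Φ := fun x => D x z a - E x z a)
    (C := (K + θ + K') * (‖z‖ ^ r * ‖a‖ ^ r)) hr
    (fun c x => by simp only [hD.2.1, hE.2.1, smul_sub]) (fun x => ?_) x)
  calc ‖D x z a - E x z a‖
      = ‖-(f x z a - D x z a) + (f x z a - g x z a) + (g x z a - E x z a)‖ := by
        congr 1; abel
    _ ≤ K * (‖x‖ ^ r * ‖z‖ ^ r * ‖a‖ ^ r) + θ * (‖x‖ ^ r * ‖z‖ ^ r * ‖a‖ ^ r) +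
        K' * (‖x‖ ^ r * ‖z‖ ^ r * ‖a‖ ^ r) := by
      refine norm_add₃_le.trans ?_
      rw [norm_neg]
      exact add_le_add (add_le_add (hfD x z a) (hfg x z a)) (hgE x z a)
    _ = _ := by ring

lemma CTrilinear.map_mul_of_norm_sub_le {A : Type*} [NormedRing A] [NormedAlgebra ℂ A]
    {f D : A → A → A → A} {K C : ℝ} (hr : 1 < r) (hD : CTrilinear D)
    (hfD : ∀ x z a, ‖f x z a - D x z a‖ ≤ K * (‖x‖ ^ r * ‖z‖ ^ r * ‖a‖ ^ r)) {u y a : A}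
    (hf : ∀ z, ‖f (u * y) z a - f u z a * y - u * f y z a‖ ≤ C * ‖z‖ ^ r) (z : A) :
    D (u * y) z a = D u z a * y + u * D y z a := by
  rw [← sub_eq_zero, ← sub_sub]
  refine eq_zero_of_map_smul_of_norm_le
    (Φ := fun z => D (u * y) z a - D u z a * y - u * D y z a)
    (C := C + K * (‖u * y‖ ^ r + ‖u‖ ^ r * ‖y‖ + ‖u‖ * ‖y‖ ^ r) * ‖a‖ ^ r) hr
    (fun c z => by simp only [hD.2.2.1, smul_mul_assoc, mul_smul_comm, smul_sub]) (fun z => ?_) z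
  calc ‖D (u * y) z a - D u z a * y - u * D y z a‖
      = ‖(f (u * y) z a - f u z a * y - u * f y z a) + -(f (u * y) z a - D (u * y) z a)
          + (f u z a - D u z a) * y + u * (f y z a - D y z a)‖ := by
        congr 1; rw [sub_mul, mul_sub]; abel
    _ ≤ ‖f (u * y) z a - f u z a * y - u * f y z a‖ + ‖f (u * y) z a - D (u * y) z a‖
          + ‖f u z a - D u z a‖ * ‖y‖ + ‖u‖ * ‖f y z a - D y z a‖ := by
      refine norm_add₄_le.trans ?_
      rw [norm_neg]
      gcongr <;> exact norm_mul_le _ _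
    _ ≤ C * ‖z‖ ^ r + K * (‖u * y‖ ^ r * ‖z‖ ^ r * ‖a‖ ^ r)
          + K * (‖u‖ ^ r * ‖z‖ ^ r * ‖a‖ ^ r) * ‖y‖
          + ‖u‖ * (K * (‖y‖ ^ r * ‖z‖ ^ r * ‖a‖ ^ r)) := by
      gcongr
      exacts [hf z, hfD _ _ _, hfD _ _ _, hfD _ _ _]
    _ = _ := by ring

lemma CTrilinear.map_mul_of_forall_unitary {A : Type*} [CStarAlgebra A] {D : A → A → A → A}
    (hD : CTrilinear D) (h : ∀ u ∈ unitary A, ∀ y z a, D (u * y) z a = D u z a * y + u * D y z a)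
    (x y z a : A) : D (x * y) z a = D x z a * y + x * D y z a := by
  have hx : x ∈ Submodule.span ℂ (unitary A : Set A) := by simp [CStarAlgebra.span_unitary]
  induction hx using Submodule.span_induction with
  | mem u hu => exact h u hu y z a
  | zero =>
    have h0 : D 0 z a = 0 := by simpa using hD.2.1 0 0 z a
    simp [h0]
  | add p q _ _ hp hq =>
    rw [add_mul, hD.1.1, hD.1.1, hp, hq, add_mul, add_mul]
    abel
  | smul c p _ hp =>
    rw [smul_mul_assoc, hD.2.1, hD.2.1, hp, smul_add, smul_mul_assoc, smul_mul_assoc]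

lemma apply_perm_eq_of_swap {α β : Type*} {D : α → α → α → β} (h₁₂ : ∀ x z a, D z x a = D x z a)
    (h₂₃ : ∀ x z a, D x a z = D x z a) (σ : Equiv.Perm (Fin 3)) (x : Fin 3 → α) :
    D (x (σ 0)) (x (σ 1)) (x (σ 2)) = D (x 0) (x 1) (x 2) := by
  have hσ : ∀ τ : Equiv.Perm (Fin 3), [τ 0, τ 1, τ 2] ∈
      [[0, 1, 2], [1, 0, 2], [0, 2, 1], [1, 2, 0], [2, 0, 1], [2, 1, 0]] := by decide
  obtain ⟨h0, h1, h2⟩ | ⟨h0, h1, h2⟩ | ⟨h0, h1, h2⟩ | ⟨h0, h1, h2⟩ | ⟨h0, h1, h2⟩ |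
      ⟨h0, h1, h2⟩ := by simpa using hσ σ
  all_goals simp only [h0, h1, h2] <;> grind

lemma CTrilinear.permutingTriderivation_of_approx {A : Type*} [CStarAlgebra A]
    {f D : A → A → A → A} {K θ : ℝ} (hr : 1 < r) (hD : CTrilinear D)
    (hfD : ∀ x z a, ‖f x z a - D x z a‖ ≤ K * (‖x‖ ^ r * ‖z‖ ^ r * ‖a‖ ^ r))
    (hperm : ∀ (σ : Equiv.Perm (Fin 3)) (x : Fin 3 → A),
      ‖f (x (σ 0)) (x (σ 1)) (x (σ 2)) - f (x 0) (x 1) (x 2)‖ ≤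
        θ * ‖x 0‖ ^ r * ‖x 1‖ ^ r * ‖x 2‖ ^ r)
    (hder : ∀ u ∈ unitary A, ∀ y z a : A,
      ‖f (u * y) z a - f u z a * y - u * f y z a‖ ≤ θ * (1 + ‖y‖ ^ r) * ‖z‖ ^ r * ‖a‖ ^ r) :
    PermutingTriderivation D := by
  have h₁₂ : ∀ x z a, ‖f x z a - f z x a‖ ≤ θ * (‖x‖ ^ r * ‖z‖ ^ r * ‖a‖ ^ r) := fun x z a => by
    simpa [Equiv.swap_apply_of_ne_of_ne, norm_sub_rev, mul_assoc] using
      hperm (Equiv.swap 0 1) ![x, z, a]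
  have h₂₃ : ∀ x z a, ‖f x z a - f x a z‖ ≤ θ * (‖x‖ ^ r * ‖z‖ ^ r * ‖a‖ ^ r) := fun x z a => by
    simpa [Equiv.swap_apply_of_ne_of_ne, norm_sub_rev, mul_assoc] using
      hperm (Equiv.swap 1 2) ![x, z, a]
  refine ⟨hD, hD.map_mul_of_forall_unitary fun u hu y z a =>
    hD.map_mul_of_norm_sub_le (C := θ * (1 + ‖y‖ ^ r) * ‖a‖ ^ r) hr hfD
      (fun z => (hder u hu y z a).trans_eq (by ring)) z,
    apply_perm_eq_of_swap (fun x z a => ?_) (fun x z a => ?_)⟩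
  · exact congrFun₃ (hD.eq_of_approx hr hD.comp_swap₁₂ hfD
      (fun x z a => (hfD z x a).trans_eq (by ring)) h₁₂).symm x z a
  · exact congrFun₃ (hD.eq_of_approx hr hD.comp_swap₂₃ hfD
      (fun x z a => (hfD x a z).trans_eq (by ring)) h₂₃).symm x z a

end Approximation

section StabilityInequality

variable {X Y : Type*} [NormedAddCommGroup X] [NormedSpace ℂ X] [NormedAddCommGroup Y]
  [NormedSpace ℂ Y] {f : X → X → X → Y} {s : ℂ} {r θ : ℝ}

def StabilityIneq (f : X → X → X → Y) (s : ℂ) (r θ : ℝ) : Prop :=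
  ∀ l m e : ℂ, ‖l‖ = 1 → ‖m‖ = 1 → ‖e‖ = 1 → ∀ x y z w a b : X,
    ‖(2 : ℂ) • f ((2 : ℂ)⁻¹ • (l • (x + y))) (m • (z - w)) (e • (a + b))
        + (2 : ℂ) • f ((2 : ℂ)⁻¹ • (l • (x - y))) (m • (z + w)) (e • (a - b))
        - (l * m * e) • ((2 : ℂ) • f x z a - (2 : ℂ) • f x w b
            + (2 : ℂ) • f y z b - (2 : ℂ) • f y w a)‖
      ≤ ‖s • D₁ f x y z w a b‖ + θ * (‖x‖ ^ r + ‖y‖ ^ r) * (‖z‖ ^ r + ‖w‖ ^ r) * (‖a‖ ^ r + ‖b‖ ^ r)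

lemma StabilityIneq.halvingEstimate (h : StabilityIneq f s r θ) (hr : r ≠ 0)
    (hzero : ∀ x z a : X, f x 0 a = 0 ∧ f 0 z a = 0 ∧ f x z 0 = 0) :
    HalvingEstimate f r (θ / 2) := by
  intro l m e hl hm he x z a
  have h := h l m e hl hm he x 0 z 0 a 0
  have hD₁ : D₁ f x 0 z 0 a 0 = 0 := by
    simp only [D₁, add_zero, sub_zero, (hzero x 0 0).1, (hzero 0 z 0).2.2, (hzero 0 0 a).2.1,
      smul_zero]
    module
  simp only [hD₁, add_zero, sub_zero, (hzero x 0 0).1, (hzero 0 z 0).2.2, (hzero 0 0 a).2.1,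
    smul_zero, norm_zero, Real.zero_rpow hr] at h
  have hv : (2 : ℂ) • f ((2 : ℂ)⁻¹ • l • x) (m • z) (e • a) +
        (2 : ℂ) • f ((2 : ℂ)⁻¹ • l • x) (m • z) (e • a) - (l * m * e) • (2 : ℂ) • f x z a =
      (2 : ℂ) • ((2 : ℂ) • f ((2 : ℂ)⁻¹ • l • x) (m • z) (e • a) - (l * m * e) • f x z a) := by
    module
  rw [hv, norm_smul, Complex.norm_ofNat] at h
  linarith

lemma StabilityIneq.norm_D₂_le (h : StabilityIneq f s r θ) (x y z w a b : X) :
    ‖D₂ f x y z w a b‖ ≤ ‖s‖ * ‖D₁ f x y z w a b‖ +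
      θ * (‖x‖ ^ r + ‖y‖ ^ r) * (‖z‖ ^ r + ‖w‖ ^ r) * (‖a‖ ^ r + ‖b‖ ^ r) := by
  have h := h 1 1 1 norm_one norm_one norm_one x y z w a b
  simp only [one_smul, mul_one, norm_smul] at h
  convert h using 2
  simp only [D₂]
  abel

end StabilityInequality

variable {A : Type*} [NormedRing A] [StarRing A] [CStarRing A]
  [NormedAlgebra ℂ A] [StarModule ℂ A] [CompleteSpace A]

theorem stmt_13_general (s : ℂ) (hs1 : ‖s‖ < 1) (r θ : ℝ) (hr : 2 < r)
    (f : A → A → A → A)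
    (hzero : ∀ x z a : A, f x 0 a = 0 ∧ f 0 z a = 0 ∧ f x z 0 = 0)
    (hineq : ∀ l m e : ℂ, ‖l‖ = 1 → ‖m‖ = 1 → ‖e‖ = 1 → ∀ x y z w a b : A,
      ‖(2 : ℂ) • f ((2 : ℂ)⁻¹ • (l • (x + y))) (m • (z - w)) (e • (a + b))
          + (2 : ℂ) • f ((2 : ℂ)⁻¹ • (l • (x - y))) (m • (z + w)) (e • (a - b))
          - (l * m * e) • ((2 : ℂ) • f x z a - (2 : ℂ) • f x w b
              + (2 : ℂ) • f y z b - (2 : ℂ) • f y w a)‖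
        ≤ ‖s • D₁ f x y z w a b‖ + θ * (‖x‖ ^ r + ‖y‖ ^ r) * (‖z‖ ^ r + ‖w‖ ^ r) * (‖a‖ ^ r + ‖b‖ ^ r)) :
    (∃! D : A → A → A → A, CTrilinear D ∧
      ∀ x z a : A, ‖f x z a - D x z a‖ ≤ (2 : ℝ) ^ r * θ / (2 * ((2 : ℝ) ^ r - 2)) * (‖x‖ ^ r * ‖z‖ ^ r * ‖a‖ ^ r)) ∧
    ((∀ (σ : Equiv.Perm (Fin 3)) (x : Fin 3 → A),
      ‖f (x (σ 0)) (x (σ 1)) (x (σ 2)) - f (x 0) (x 1) (x 2)‖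
        ≤ θ * ‖x 0‖ ^ r * ‖x 1‖ ^ r * ‖x 2‖ ^ r) →
     (∀ u : A, u ∈ unitary A → ∀ y z a : A,
      ‖f (u * y) z a - f u z a * y - u * f y z a‖
        ≤ θ * (1 + ‖y‖ ^ r) * ‖z‖ ^ r * ‖a‖ ^ r) →
     ∀ D : A → A → A → A,
       (CTrilinear D ∧ ∀ x z a : A, ‖f x z a - D x z a‖ ≤ (2 : ℝ) ^ r * θ / (2 * ((2 : ℝ) ^ r - 2)) * (‖x‖ ^ r * ‖z‖ ^ r * ‖a‖ ^ r)) →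
       PermutingTriderivation D) := by
  have hr₁ : 1 < r := by linarith
  have hf := StabilityIneq.halvingEstimate hineq (by positivity) hzero
  have hbound : ∀ x z a, ‖f x z a - dyadicLimit₁ f x z a‖ ≤
      2 ^ r * θ / (2 * (2 ^ r - 2)) * (‖x‖ ^ r * ‖z‖ ^ r * ‖a‖ ^ r) := fun x z a =>
    (hf.norm_sub_dyadicLimit₁_le hr₁ x z a).trans_eq (by rw [← mul_div_assoc, div_div])
  have hD : CTrilinear (dyadicLimit₁ f) :=
    cTrilinear_of_D₁_eq_zero (hf.D₁_dyadicLimit₁_eq_zero hr₁ hs1 (StabilityIneq.norm_D₂_le hineq))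
      fun l m e hl hm he => hf.dyadicLimit₁_unit_smul hr₁ hl hm he
  refine ⟨⟨dyadicLimit₁ f, ⟨hD, hbound⟩, fun D hD' =>
    hD'.1.eq_of_approx hr₁ hD hD'.2 hbound (θ := 0) fun _ _ _ => by simp⟩, ?_⟩
  rintro hperm hder D ⟨hD, hfD⟩
  let _ : CStarAlgebra A := {}
  exact hD.permutingTriderivation_of_approx hr₁ hfD hperm hder

theorem stmt_13 (s : ℂ) (hs0 : s ≠ 0) (hs1 : ‖s‖ < 1) (r θ : ℝ) (hr : 2 < r) (hθ : 0 ≤ θ)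
    (f : A → A → A → A)
    (hzero : ∀ x z a : A, f x 0 a = 0 ∧ f 0 z a = 0 ∧ f x z 0 = 0)
    (hineq : ∀ l m e : ℂ, ‖l‖ = 1 → ‖m‖ = 1 → ‖e‖ = 1 → ∀ x y z w a b : A,
      ‖(2 : ℂ) • f ((2 : ℂ)⁻¹ • (l • (x + y))) (m • (z - w)) (e • (a + b))
          + (2 : ℂ) • f ((2 : ℂ)⁻¹ • (l • (x - y))) (m • (z + w)) (e • (a - b))
          - (l * m * e) • ((2 : ℂ) • f x z a - (2 : ℂ) • f x w b
              + (2 : ℂ) • f y z b - (2 : ℂ) • f y w a)‖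
        ≤ ‖s • D₁ f x y z w a b‖ + θ * (‖x‖ ^ r + ‖y‖ ^ r) * (‖z‖ ^ r + ‖w‖ ^ r) * (‖a‖ ^ r + ‖b‖ ^ r)) :
    (∃! D : A → A → A → A, CTrilinear D ∧
      ∀ x z a : A, ‖f x z a - D x z a‖ ≤ (2 : ℝ) ^ r * θ / (2 * ((2 : ℝ) ^ r - 2)) * (‖x‖ ^ r * ‖z‖ ^ r * ‖a‖ ^ r)) ∧
    ((∀ (σ : Equiv.Perm (Fin 3)) (x : Fin 3 → A),
      ‖f (x (σ 0)) (x (σ 1)) (x (σ 2)) - f (x 0) (x 1) (x 2)‖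
        ≤ θ * ‖x 0‖ ^ r * ‖x 1‖ ^ r * ‖x 2‖ ^ r) →
     (∀ u : A, u ∈ unitary A → ∀ y z a : A,
      ‖f (u * y) z a - f u z a * y - u * f y z a‖
        ≤ θ * (1 + ‖y‖ ^ r) * ‖z‖ ^ r * ‖a‖ ^ r) →
     ∀ D : A → A → A → A,
       (CTrilinear D ∧ ∀ x z a : A, ‖f x z a - D x z a‖ ≤ (2 : ℝ) ^ r * θ / (2 * ((2 : ℝ) ^ r - 2)) * (‖x‖ ^ r * ‖z‖ ^ r * ‖a‖ ^ r)) →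
       PermutingTriderivation D) :=
  stmt_13_general s hs1 r θ hr f hzero hineq
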